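/- arXiv:2004.01365 — 2 statements merged into one kernel-verified Lean document; each statement's English description precedes it below -/
import Mathlib

section
/- In the C_5-setup, for each i, every vertex of X_i is complete to A_{i+2} or complete to A_{i−2}. -/
open SimpleGraph

/-- `G` contains no induced copy of `H`. -/
def InducedFree {W V : Type*} (H : SimpleGraph W) (G : SimpleGraph V) : Prop :=
  IsEmpty (H ↪g G)

/-- The `k`-wheel: a chordless cycle `C_k` plus an extra vertex adjacent to all of it. -/
def wheel (k : ℕ) : SimpleGraph (Fin k ⊕ Unit) :=
  SimpleGraph.fromRel (fun x y =>
    (∃ a b, x = Sum.inl a ∧ y = Sum.inl b ∧ (SimpleGraph.cycleGraph k).Adj a b) ∨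
    (x.isLeft ∧ y.isRight))

/-- A stable (independent) set: pairwise nonadjacent vertices. -/
def IsStableSet {V : Type*} (G : SimpleGraph V) (S : Set V) : Prop :=
  S.Pairwise (fun a b => ¬ G.Adj a b)

/-- A graph is nice if it has three disjoint stable sets whose removal
drops the clique number by at least 2. -/
def IsNice {V : Type*} (G : SimpleGraph V) : Prop :=
  ∃ S₁ S₂ S₃ : Set V, IsStableSet G S₁ ∧ IsStableSet G S₂ ∧ IsStableSet G S₃ ∧
    Disjoint S₁ S₂ ∧ Disjoint S₁ S₃ ∧ Disjoint S₂ S₃ ∧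
    (G.induce ((S₁ ∪ S₂ ∪ S₃)ᶜ)).cliqueNum ≤ G.cliqueNum - 2

/-- A quasi-line graph: every neighborhood is the union of two cliques. -/
def IsQuasiLine {V : Type*} (G : SimpleGraph V) : Prop :=
  ∀ v : V, ∃ K₁ K₂ : Set V, G.IsClique K₁ ∧ G.IsClique K₂ ∧
    G.neighborSet v = K₁ ∪ K₂

/-- A clique cutset: a clique whose removal increases the number of
connected components. -/
def HasCliqueCutset {V : Type*} (G : SimpleGraph V) : Prop :=
  ∃ Q : Set V, G.IsClique Q ∧
    Nat.card G.ConnectedComponent < Nat.card (G.induce (Qᶜ)).ConnectedComponent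

/-- An atom is a graph with no clique cutset. -/
def IsGraphAtom {V : Type*} (G : SimpleGraph V) : Prop := ¬ HasCliqueCutset G

/-- A perfect graph: every induced subgraph has chromatic number equal to
its clique number. -/
def IsPerfect {V : Type*} (G : SimpleGraph V) : Prop :=
  ∀ S : Set V, (G.induce S).chromaticNumber = ((G.induce S).cliqueNum : ℕ∞)

/-- The union `A = A₁ ∪ ⋯ ∪ A₅` of the `C₅`-setup. -/
def setA {V : Type*} (A : Fin 5 → Set V) : Set V := ⋃ i, A i

/-- `T`: vertices outside `A` with no neighbor in `A`. -/
def setT {V : Type*} (G : SimpleGraph V) (A : Fin 5 → Set V) : Set V :=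
  {x | x ∉ setA A ∧ ∀ a ∈ setA A, ¬ G.Adj x a}

/-- `Z`: vertices outside `A` with a neighbor in every `A i`. -/
def setZ {V : Type*} (G : SimpleGraph V) (A : Fin 5 → Set V) : Set V :=
  {x | x ∉ setA A ∧ ∀ i : Fin 5, ∃ a ∈ A i, G.Adj x a}

/-- `X i`: vertices outside `A` with a neighbor in each of `A i`, `A (i+2)`,
`A (i-2)`, and anticomplete to `A (i+1) ∪ A (i-1)`. -/
def setX {V : Type*} (G : SimpleGraph V) (A : Fin 5 → Set V) (i : Fin 5) : Set V :=
  {x | x ∉ setA A ∧ (∃ a ∈ A i, G.Adj x a) ∧ (∃ a ∈ A (i + 2), G.Adj x a) ∧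
    (∃ a ∈ A (i - 2), G.Adj x a) ∧ ∀ a ∈ A (i + 1) ∪ A (i - 1), ¬ G.Adj x a}

/-- `Y i`: vertices outside `A` with a neighbor in each `A j`, `j ≠ i`,
and anticomplete to `A i`. -/
def setY {V : Type*} (G : SimpleGraph V) (A : Fin 5 → Set V) (i : Fin 5) : Set V :=
  {x | x ∉ setA A ∧ (∀ j : Fin 5, j ≠ i → ∃ a ∈ A j, G.Adj x a) ∧
    ∀ a ∈ A i, ¬ G.Adj x a}

/-!
If `x ∈ X i` had non-neighbours `b ∈ A (i + 2)` and `b' ∈ A (i - 2)`, then for a neighbour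
`a ∈ A i` of `x` and any `a₁ ∈ A (i + 1)`, the vertices `x, a, a₁, b, b'` would induce a `P₅`.
-/

namespace SimpleGraph.Embedding

variable {W V : Type*} {H : SimpleGraph W} {G : SimpleGraph V}

/-- Injectivity comes for free when distinct vertices of `H` have distinct neighbourhoods. -/
def ofAdjIff (hH : ∀ u v, (∀ w, H.Adj u w ↔ H.Adj v w) → u = v) (f : W → V)
    (hf : ∀ u v, G.Adj (f u) (f v) ↔ H.Adj u v) : H ↪g G where
  toFun := f
  inj' u v huv := hH u v fun w => by rw [← hf, ← hf, huv]
  map_rel_iff' := hf _ _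

end SimpleGraph.Embedding

lemma pathGraph_five_eq_of_adj_iff :
    ∀ u v : Fin 5, (∀ w, (pathGraph 5).Adj u w ↔ (pathGraph 5).Adj v w) → u = v := by
  simp only [pathGraph_adj]
  decide

lemma InducedFree.false_of_induced_path_five {V : Type*} {G : SimpleGraph V}
    (hP5 : InducedFree (pathGraph 5) G) {v₀ v₁ v₂ v₃ v₄ : V}
    (h₀₁ : G.Adj v₀ v₁) (h₁₂ : G.Adj v₁ v₂) (h₂₃ : G.Adj v₂ v₃) (h₃₄ : G.Adj v₃ v₄)
    (n₀₂ : ¬ G.Adj v₀ v₂) (n₀₃ : ¬ G.Adj v₀ v₃) (n₀₄ : ¬ G.Adj v₀ v₄)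
    (n₁₃ : ¬ G.Adj v₁ v₃) (n₁₄ : ¬ G.Adj v₁ v₄) (n₂₄ : ¬ G.Adj v₂ v₄) : False := by
  refine hP5.false (Embedding.ofAdjIff pathGraph_five_eq_of_adj_iff ![v₀, v₁, v₂, v₃, v₄] ?_)
  intro u v
  fin_cases u <;> fin_cases v <;>
    simp [pathGraph_adj, h₀₁, h₁₂, h₂₃, h₃₄, h₀₁.symm, h₁₂.symm, h₂₃.symm, h₃₄.symm,
      n₀₂, n₀₃, n₀₄, n₁₃, n₁₄, n₂₄, mt G.adj_symm n₀₂, mt G.adj_symm n₀₃, mt G.adj_symm n₀₄,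
      mt G.adj_symm n₁₃, mt G.adj_symm n₁₄, mt G.adj_symm n₂₄]

theorem stmt_13_general {V : Type*} (G : SimpleGraph V) (A : Fin 5 → Set V)
    (hP5 : InducedFree (SimpleGraph.pathGraph 5) G)
    (hAne : ∀ i : Fin 5, (A i).Nonempty)
    (hAcomp : ∀ i : Fin 5, ∀ a ∈ A i, ∀ b ∈ A (i + 1), G.Adj a b)
    (hAanti : ∀ i : Fin 5, ∀ a ∈ A i, ∀ b ∈ A (i + 2), ¬ G.Adj a b) :
    ∀ i : Fin 5, ∀ x ∈ setX G A i,
      (∀ a ∈ A (i + 2), G.Adj x a) ∨ (∀ a ∈ A (i - 2), G.Adj x a) := by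
  rintro i x ⟨-, ⟨a, ha, hxa⟩, -, -, hx_anti⟩
  by_contra! ⟨⟨b, hb, hxb⟩, ⟨b', hb', hxb'⟩⟩
  obtain ⟨a₁, ha₁⟩ := hAne (i + 1)
  have hb₁ : b ∈ A (i + 1 + 1) := by rwa [show i + 1 + 1 = i + 2 by omega]
  have hb'₂ : b' ∈ A (i + 2 + 1) := by rwa [show i + 2 + 1 = i - 2 by omega]
  have hb'₁ : b' ∈ A (i + 1 + 2) := by rwa [show i + 1 + 2 = i - 2 by omega]
  have ha₂ : a ∈ A (i - 2 + 2) := by rwa [show i - 2 + 2 = i by omega]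
  exact hP5.false_of_induced_path_five hxa (hAcomp i a ha a₁ ha₁)
    (hAcomp (i + 1) a₁ ha₁ b hb₁) (hAcomp (i + 2) b hb b' hb'₂)
    (hx_anti a₁ (Or.inl ha₁)) hxb hxb' (hAanti i a ha b hb)
    (fun h => hAanti (i - 2) b' hb' a ha₂ h.symm) (hAanti (i + 1) a₁ ha₁ b' hb'₁)

theorem stmt_13 {V : Type*} [Fintype V] (G : SimpleGraph V) (A : Fin 5 → Set V)
    (hconn : G.Connected)
    (hP5 : InducedFree (SimpleGraph.pathGraph 5) G)
    (hW4 : InducedFree (wheel 4) G)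
    (hatom : IsGraphAtom G)
    (hAne : ∀ i : Fin 5, (A i).Nonempty)
    (hAdisj : ∀ i j : Fin 5, i ≠ j → Disjoint (A i) (A j))
    (hAcomp : ∀ i : Fin 5, ∀ a ∈ A i, ∀ b ∈ A (i + 1), G.Adj a b)
    (hAanti : ∀ i : Fin 5, ∀ a ∈ A i, ∀ b ∈ A (i + 2), ¬ G.Adj a b)
    (hAmax : ∀ v : V, v ∉ setA A → ¬ ∃ i : Fin 5,
      (∀ a ∈ A (i - 1) ∪ A (i + 1), G.Adj v a) ∧
      (∀ a ∈ A (i - 2) ∪ A (i + 2), ¬ G.Adj v a)) :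
    ∀ i : Fin 5, ∀ x ∈ setX G A i,
      (∀ a ∈ A (i + 2), G.Adj x a) ∨ (∀ a ∈ A (i - 2), G.Adj x a) :=
  stmt_13_general G A hP5 hAne hAcomp hAanti
end

section
/- In the C_5-setup, if Z is nonempty then Z is a clique. -/
open SimpleGraph

/-! Let `z, z'` be distinct, nonadjacent vertices with a neighbour in every `A i`, and call `A i`
free if it contains no common neighbour of `z` and `z'`. Common neighbours in `A 0`, `A 1`, `A 2`
would span a 4-wheel centred in `A 1`, so some part is free. If `A i` is free, so is `A (i + 2)`:
a common neighbour `u` there, with neighbours `a` of `z` and `b` of `z'` in `A i`, gives the `P₅`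
`a - z - u - z' - b` unless `a ~ b`; and if `a ~ b`, then `P₅`-freeness makes `z, z'` complete to
`A (i + 2) ∪ A (i + 3)`, 4-wheels make `A (i + 1)`, `A (i + 4)` free, and a `P₅` through `A (i + 1)`
and `A (i + 4)` appears. As `2` generates `ℤ/5`, every part is free, and then
`z - a₀ - b₁ - z' - b₃` is an induced `P₅`. -/

theorem wheel_adj_inl_inl {k : ℕ} {a b : Fin k} :
    (wheel k).Adj (.inl a) (.inl b) ↔ (cycleGraph k).Adj a b := by
  simpa [wheel, fromRel_adj, (cycleGraph k).adj_comm b a] using (cycleGraph k).ne_of_adj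

theorem wheel_adj_inl_inr {k : ℕ} (a : Fin k) (u : Unit) : (wheel k).Adj (.inl a) (.inr u) := by
  simp [wheel, fromRel_adj]

namespace SimpleGraph

variable {V : Type*} {G : SimpleGraph V} {S : Set V} {z z' u : V}

theorem injective_of_adj_iff {W : Type*} {H : SimpleGraph W} {f : W → V}
    (hf : ∀ a b, G.Adj (f a) (f b) ↔ H.Adj a b)
    (hsep : ∀ a b, a ≠ b → ¬ H.Adj a b → f a ≠ f b) : f.Injective := by
  intro a b hab
  by_contra hne
  exact hsep a b hne (fun h => G.irrefl (hab ▸ (hf a b).2 h)) hab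

theorem not_adj_right_of_disjoint_commonNeighbors (h : Disjoint S (G.commonNeighbors z z'))
    (hu : u ∈ S) (hzu : G.Adj z u) : ¬ G.Adj z' u :=
  fun hz'u => Set.disjoint_left.1 h hu ⟨hzu, hz'u⟩

theorem not_adj_left_of_disjoint_commonNeighbors (h : Disjoint S (G.commonNeighbors z z'))
    (hu : u ∈ S) (hz'u : G.Adj z' u) : ¬ G.Adj z u :=
  fun hzu => Set.disjoint_left.1 h hu ⟨hzu, hz'u⟩

end SimpleGraph

section InducedFree

variable {V : Type*} {G : SimpleGraph V}

/-- No distinctness hypotheses are needed: no two vertices of `P₅` have the same neighbourhood. -/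
theorem InducedFree.false_of_pathGraph_five (hP5 : InducedFree (pathGraph 5) G)
    {v₀ v₁ v₂ v₃ v₄ : V}
    (h₀₁ : G.Adj v₀ v₁) (h₁₂ : G.Adj v₁ v₂) (h₂₃ : G.Adj v₂ v₃) (h₃₄ : G.Adj v₃ v₄)
    (h₀₂ : ¬ G.Adj v₀ v₂) (h₀₃ : ¬ G.Adj v₀ v₃) (h₀₄ : ¬ G.Adj v₀ v₄)
    (h₁₃ : ¬ G.Adj v₁ v₃) (h₁₄ : ¬ G.Adj v₁ v₄) (h₂₄ : ¬ G.Adj v₂ v₄) : False := by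
  let f : Fin 5 → V := ![v₀, v₁, v₂, v₃, v₄]
  have hf : ∀ a b, G.Adj (f a) (f b) ↔ (pathGraph 5).Adj a b := by
    intro a b
    fin_cases a <;> fin_cases b <;>
      simp [f, pathGraph_adj, h₀₁, h₁₂, h₂₃, h₃₄, h₀₁.symm, h₁₂.symm, h₂₃.symm, h₃₄.symm,
        h₀₂, h₀₃, h₀₄, h₁₃, h₁₄, h₂₄, G.adj_comm v₂ v₀, G.adj_comm v₃ v₀, G.adj_comm v₄ v₀,
        G.adj_comm v₃ v₁, G.adj_comm v₄ v₁, G.adj_comm v₄ v₂]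
  have htwin : ∀ a b, a ≠ b → ¬ ∀ c, (pathGraph 5).Adj a c ↔ (pathGraph 5).Adj b c := by
    simp only [pathGraph_adj]; decide
  have hsep : ∀ a b, a ≠ b → ¬ (pathGraph 5).Adj a b → f a ≠ f b :=
    fun a b hab _ heq => htwin a b hab fun c => by rw [← hf, ← hf, heq]
  exact hP5.false ⟨⟨f, injective_of_adj_iff hf hsep⟩, hf _ _⟩

theorem InducedFree.false_of_wheel_four (hW4 : InducedFree (wheel 4) G) {v₀ v₁ v₂ v₃ c : V}
    (h₀₁ : G.Adj v₀ v₁) (h₁₂ : G.Adj v₁ v₂) (h₂₃ : G.Adj v₂ v₃) (h₃₀ : G.Adj v₃ v₀)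
    (hc₀ : G.Adj c v₀) (hc₁ : G.Adj c v₁) (hc₂ : G.Adj c v₂) (hc₃ : G.Adj c v₃)
    (h₀₂ : ¬ G.Adj v₀ v₂) (h₁₃ : ¬ G.Adj v₁ v₃) (hne₀₂ : v₀ ≠ v₂) (hne₁₃ : v₁ ≠ v₃) :
    False := by
  let f : Fin 4 ⊕ Unit → V := Sum.elim ![v₀, v₁, v₂, v₃] fun _ => c
  have hf : ∀ a b, G.Adj (f a) (f b) ↔ (wheel 4).Adj a b := by
    rintro (a | ⟨⟩) (b | ⟨⟩)
    · fin_cases a <;> fin_cases b <;>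
        simp [f, wheel_adj_inl_inl, cycleGraph_adj, h₀₁, h₁₂, h₂₃, h₃₀, h₀₁.symm, h₁₂.symm,
          h₂₃.symm, h₃₀.symm, h₀₂, h₁₃, G.adj_comm v₂ v₀, G.adj_comm v₃ v₁] <;> decide
    · fin_cases a <;> simp [f, wheel_adj_inl_inr, hc₀.symm, hc₁.symm, hc₂.symm, hc₃.symm]
    · fin_cases b <;>
        simp [f, (wheel 4).adj_comm (.inr _), wheel_adj_inl_inr, hc₀, hc₁, hc₂, hc₃]
    · simp [f]
  have hsep : ∀ a b, a ≠ b → ¬ (wheel 4).Adj a b → f a ≠ f b := by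
    rintro (a | ⟨⟩) (b | ⟨⟩) hab hnadj
    · obtain rfl : b = a + 2 := by
        revert a b; simp only [wheel_adj_inl_inl, cycleGraph_adj]; decide
      fin_cases a <;> simp [f, hne₀₂, hne₁₃, hne₀₂.symm, hne₁₃.symm]
    · exact absurd (wheel_adj_inl_inr a ()) hnadj
    · exact absurd (wheel_adj_inl_inr b ()).symm hnadj
    · exact absurd rfl hab
  exact hW4.false ⟨⟨f, injective_of_adj_iff hf hsep⟩, hf _ _⟩

end InducedFree

structure IsC5Blowup {V : Type*} (G : SimpleGraph V) (A : Fin 5 → Set V) : Prop where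
  nonempty : ∀ i, (A i).Nonempty
  adj_add_one : ∀ i, ∀ a ∈ A i, ∀ b ∈ A (i + 1), G.Adj a b
  not_adj_add_two : ∀ i, ∀ a ∈ A i, ∀ b ∈ A (i + 2), ¬ G.Adj a b

namespace IsC5Blowup

variable {V : Type*} {G : SimpleGraph V} {A : Fin 5 → Set V} {a b z z' : V}

theorem rotate (hA : IsC5Blowup G A) (i : Fin 5) : IsC5Blowup G (fun j => A (i + j)) where
  nonempty j := hA.nonempty (i + j)
  adj_add_one j a ha b hb := hA.adj_add_one (i + j) a ha b (by rwa [add_assoc])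
  not_adj_add_two j a ha b hb := hA.not_adj_add_two (i + j) a ha b (by rwa [add_assoc])

theorem adj_of_mem (hA : IsC5Blowup G A) {i j : Fin 5} (hij : j = i + 1 ∨ i = j + 1)
    (ha : a ∈ A i) (hb : b ∈ A j) : G.Adj a b := by
  rcases hij with rfl | rfl
  · exact hA.adj_add_one i a ha b hb
  · exact (hA.adj_add_one j b hb a ha).symm

theorem not_adj_of_mem (hA : IsC5Blowup G A) {i j : Fin 5} (hij : j = i + 2 ∨ i = j + 2)
    (ha : a ∈ A i) (hb : b ∈ A j) : ¬ G.Adj a b := by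
  rcases hij with rfl | rfl
  · exact hA.not_adj_add_two i a ha b hb
  · exact fun h => hA.not_adj_add_two j b hb a ha h.symm

/-- `A (i + 3)` is complete to `A (i + 2)` and anticomplete to `A i`. -/
theorem ne_of_mem_add_two (hA : IsC5Blowup G A) {i : Fin 5} (ha : a ∈ A i) (hb : b ∈ A (i + 2)) :
    a ≠ b := by
  rintro rfl
  obtain ⟨w, hw⟩ := hA.nonempty (i + 3)
  have h₁ : i + 2 + 1 = i + 3 := by rw [add_assoc]; rfl
  have h₂ : i + 3 + 2 = i := by rw [add_assoc]; exact add_zero i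
  exact hA.not_adj_add_two (i + 3) w hw a (by rwa [h₂])
    (hA.adj_add_one (i + 2) a hb w (by rwa [h₁])).symm

theorem adj_of_mem_two_or_three (hA : IsC5Blowup G A) (hP5 : InducedFree (pathGraph 5) G)
    (hz : ∀ i, ∃ x ∈ A i, G.Adj z x) (ha : a ∈ A 0) (hb : b ∈ A 0) (hab : G.Adj a b)
    (hza : G.Adj z a) (hzb : ¬ G.Adj z b) : ∀ y ∈ A 2 ∪ A 3, G.Adj z y := by
  rintro y (hy | hy) <;> by_contra hzy
  · obtain ⟨u, hu, hzu⟩ := hz 3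
    exact hP5.false_of_pathGraph_five (hA.adj_of_mem (by decide) hy hu) hzu.symm hza hab
      (fun h => hzy h.symm) (hA.not_adj_of_mem (by decide) hy ha)
      (hA.not_adj_of_mem (by decide) hy hb) (hA.not_adj_of_mem (by decide) hu ha)
      (hA.not_adj_of_mem (by decide) hu hb) hzb
  · obtain ⟨u, hu, hzu⟩ := hz 2
    exact hP5.false_of_pathGraph_five (hA.adj_of_mem (by decide) hy hu) hzu.symm hza hab
      (fun h => hzy h.symm) (hA.not_adj_of_mem (by decide) hy ha)
      (hA.not_adj_of_mem (by decide) hy hb) (hA.not_adj_of_mem (by decide) hu ha)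
      (hA.not_adj_of_mem (by decide) hu hb) hzb

theorem disjoint_commonNeighbors_one_and_four (hA : IsC5Blowup G A)
    (hW4 : InducedFree (wheel 4) G) (hne : z ≠ z') (hzz : ¬ G.Adj z z')
    (hz : ∀ y ∈ A 2 ∪ A 3, G.Adj z y) (hz' : ∀ y ∈ A 2 ∪ A 3, G.Adj z' y) :
    Disjoint (A 1) (G.commonNeighbors z z') ∧ Disjoint (A 4) (G.commonNeighbors z z') := by
  obtain ⟨t₂, ht₂⟩ := hA.nonempty 2
  obtain ⟨t₃, ht₃⟩ := hA.nonempty 3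
  have hzt₂ := hz t₂ (.inl ht₂)
  have hz't₂ := hz' t₂ (.inl ht₂)
  have hzt₃ := hz t₃ (.inr ht₃)
  have hz't₃ := hz' t₃ (.inr ht₃)
  constructor <;> refine Set.disjoint_left.2 fun u hu ⟨hzu, hz'u⟩ => ?_
  · exact hW4.false_of_wheel_four hz'u.symm hz't₃ hzt₃.symm hzu
      (hA.adj_of_mem (by decide) ht₂ hu) hz't₂.symm (hA.adj_of_mem (by decide) ht₂ ht₃)
      hzt₂.symm (hA.not_adj_of_mem (by decide) hu ht₃) (fun h => hzz h.symm)
      (hA.ne_of_mem_add_two hu ht₃) hne.symm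
  · exact hW4.false_of_wheel_four hz'u.symm hz't₂ hzt₂.symm hzu
      (hA.adj_of_mem (by decide) ht₃ hu) hz't₃.symm (hA.adj_of_mem (by decide) ht₃ ht₂)
      hzt₃.symm (hA.not_adj_of_mem (by decide) hu ht₂) (fun h => hzz h.symm)
      (hA.ne_of_mem_add_two ht₂ hu).symm hne.symm

theorem not_adj_of_disjoint_commonNeighbors_zero (hA : IsC5Blowup G A)
    (hP5 : InducedFree (pathGraph 5) G) (hW4 : InducedFree (wheel 4) G)
    (hz : ∀ i, ∃ x ∈ A i, G.Adj z x) (hz' : ∀ i, ∃ x ∈ A i, G.Adj z' x) (hne : z ≠ z')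
    (hzz : ¬ G.Adj z z') (h₀ : Disjoint (A 0) (G.commonNeighbors z z'))
    (ha : a ∈ A 0) (hb : b ∈ A 0) (hza : G.Adj z a) (hz'b : G.Adj z' b) : ¬ G.Adj a b := by
  intro hab
  have hz₂₃ := hA.adj_of_mem_two_or_three hP5 hz ha hb hab hza
    (not_adj_left_of_disjoint_commonNeighbors h₀ hb hz'b)
  have hz'₂₃ := hA.adj_of_mem_two_or_three hP5 hz' hb ha hab.symm hz'b
    (not_adj_right_of_disjoint_commonNeighbors h₀ ha hza)
  obtain ⟨h₁, h₄⟩ := disjoint_commonNeighbors_one_and_four hA hW4 hne hzz hz₂₃ hz'₂₃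
  obtain ⟨t, ht⟩ := hA.nonempty 3
  obtain ⟨a₁, ha₁, hza₁⟩ := hz 1
  obtain ⟨b₁, hb₁, hz'b₁⟩ := hz' 1
  obtain ⟨b₄, hb₄, hz'b₄⟩ := hz' 4
  have hz'a₁ := not_adj_right_of_disjoint_commonNeighbors h₁ ha₁ hza₁
  have hzb₁ := not_adj_left_of_disjoint_commonNeighbors h₁ hb₁ hz'b₁
  have hab₁ : G.Adj a₁ b₁ := by
    by_contra hab₁
    exact hP5.false_of_pathGraph_five hza₁.symm (hz₂₃ t (.inr ht)) (hz'₂₃ t (.inr ht)).symm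
      hz'b₁ (hA.not_adj_of_mem (by decide) ha₁ ht) (fun h => hz'a₁ h.symm) hab₁ hzz hzb₁
      (hA.not_adj_of_mem (by decide) ht hb₁)
  exact hP5.false_of_pathGraph_five hza₁ hab₁ hz'b₁.symm hz'b₄ hzb₁ hzz
    (not_adj_left_of_disjoint_commonNeighbors h₄ hb₄ hz'b₄)
    (fun h => hz'a₁ h.symm) (hA.not_adj_of_mem (by decide) ha₁ hb₄)
    (hA.not_adj_of_mem (by decide) hb₁ hb₄)

theorem disjoint_commonNeighbors_two_of_zero (hA : IsC5Blowup G A)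
    (hP5 : InducedFree (pathGraph 5) G) (hW4 : InducedFree (wheel 4) G)
    (hz : ∀ i, ∃ x ∈ A i, G.Adj z x) (hz' : ∀ i, ∃ x ∈ A i, G.Adj z' x) (hne : z ≠ z')
    (hzz : ¬ G.Adj z z') (h₀ : Disjoint (A 0) (G.commonNeighbors z z')) :
    Disjoint (A 2) (G.commonNeighbors z z') := by
  refine Set.disjoint_left.2 fun u hu ⟨hzu, hz'u⟩ => ?_
  obtain ⟨a, ha, hza⟩ := hz 0
  obtain ⟨b, hb, hz'b⟩ := hz' 0
  exact hP5.false_of_pathGraph_five hza.symm hzu hz'u.symm hz'b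
    (hA.not_adj_of_mem (by decide) ha hu)
    (fun h => not_adj_right_of_disjoint_commonNeighbors h₀ ha hza h.symm)
    (hA.not_adj_of_disjoint_commonNeighbors_zero hP5 hW4 hz hz' hne hzz h₀ ha hb hza hz'b) hzz
    (not_adj_left_of_disjoint_commonNeighbors h₀ hb hz'b)
    (hA.not_adj_of_mem (by decide) hu hb)

theorem disjoint_commonNeighbors_add_two (hA : IsC5Blowup G A)
    (hP5 : InducedFree (pathGraph 5) G) (hW4 : InducedFree (wheel 4) G)
    (hz : ∀ i, ∃ x ∈ A i, G.Adj z x) (hz' : ∀ i, ∃ x ∈ A i, G.Adj z' x) (hne : z ≠ z')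
    (hzz : ¬ G.Adj z z') {i : Fin 5} (hi : Disjoint (A i) (G.commonNeighbors z z')) :
    Disjoint (A (i + 2)) (G.commonNeighbors z z') :=
  (hA.rotate i).disjoint_commonNeighbors_two_of_zero hP5 hW4 (fun j => hz (i + j))
    (fun j => hz' (i + j)) hne hzz (by simpa using hi)

theorem disjoint_commonNeighbors_of_disjoint (hA : IsC5Blowup G A)
    (hP5 : InducedFree (pathGraph 5) G) (hW4 : InducedFree (wheel 4) G)
    (hz : ∀ i, ∃ x ∈ A i, G.Adj z x) (hz' : ∀ i, ∃ x ∈ A i, G.Adj z' x) (hne : z ≠ z')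
    (hzz : ¬ G.Adj z z') {i : Fin 5} (hi : Disjoint (A i) (G.commonNeighbors z z')) (j : Fin 5) :
    Disjoint (A j) (G.commonNeighbors z z') := by
  have hcover : ∀ i j : Fin 5, ∃ k < 5, j = (· + 2)^[k] i := by decide
  obtain ⟨k, -, rfl⟩ := hcover i j
  induction k with
  | zero => exact hi
  | succ k ih =>
    rw [Function.iterate_succ_apply']
    exact hA.disjoint_commonNeighbors_add_two hP5 hW4 hz hz' hne hzz ih

theorem exists_disjoint_commonNeighbors (hA : IsC5Blowup G A) (hW4 : InducedFree (wheel 4) G)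
    (hne : z ≠ z') (hzz : ¬ G.Adj z z') : ∃ i, Disjoint (A i) (G.commonNeighbors z z') := by
  by_contra! h
  obtain ⟨u₀, hu₀, hzu₀, hz'u₀⟩ := Set.not_disjoint_iff.1 (h 0)
  obtain ⟨u₁, hu₁, hzu₁, hz'u₁⟩ := Set.not_disjoint_iff.1 (h 1)
  obtain ⟨u₂, hu₂, hzu₂, hz'u₂⟩ := Set.not_disjoint_iff.1 (h 2)
  exact hW4.false_of_wheel_four hzu₀.symm hzu₂ hz'u₂.symm hz'u₀
    (hA.adj_of_mem (by decide) hu₁ hu₀) hzu₁.symm (hA.adj_of_mem (by decide) hu₁ hu₂) hz'u₁.symm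
    (hA.not_adj_of_mem (by decide) hu₀ hu₂) hzz (hA.ne_of_mem_add_two hu₀ hu₂) hne

theorem adj_of_forall_exists_adj (hA : IsC5Blowup G A)
    (hP5 : InducedFree (pathGraph 5) G) (hW4 : InducedFree (wheel 4) G)
    (hz : ∀ i, ∃ x ∈ A i, G.Adj z x) (hz' : ∀ i, ∃ x ∈ A i, G.Adj z' x) (hne : z ≠ z') :
    G.Adj z z' := by
  by_contra hzz
  obtain ⟨i, hi⟩ := hA.exists_disjoint_commonNeighbors hW4 hne hzz
  have hall := hA.disjoint_commonNeighbors_of_disjoint hP5 hW4 hz hz' hne hzz hi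
  obtain ⟨a₀, ha₀, hza₀⟩ := hz 0
  obtain ⟨b₁, hb₁, hz'b₁⟩ := hz' 1
  obtain ⟨b₃, hb₃, hz'b₃⟩ := hz' 3
  exact hP5.false_of_pathGraph_five hza₀ (hA.adj_of_mem (by decide) ha₀ hb₁) hz'b₁.symm hz'b₃
    (not_adj_left_of_disjoint_commonNeighbors (hall 1) hb₁ hz'b₁) hzz
    (not_adj_left_of_disjoint_commonNeighbors (hall 3) hb₃ hz'b₃)
    (fun h => not_adj_right_of_disjoint_commonNeighbors (hall 0) ha₀ hza₀ h.symm)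
    (hA.not_adj_of_mem (by decide) ha₀ hb₃) (hA.not_adj_of_mem (by decide) hb₁ hb₃)

end IsC5Blowup

theorem stmt_18_general {V : Type*} (G : SimpleGraph V) (A : Fin 5 → Set V)
    (hP5 : InducedFree (SimpleGraph.pathGraph 5) G)
    (hW4 : InducedFree (wheel 4) G)
    (hAne : ∀ i : Fin 5, (A i).Nonempty)
    (hAcomp : ∀ i : Fin 5, ∀ a ∈ A i, ∀ b ∈ A (i + 1), G.Adj a b)
    (hAanti : ∀ i : Fin 5, ∀ a ∈ A i, ∀ b ∈ A (i + 2), ¬ G.Adj a b) :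
    G.IsClique (setZ G A) :=
  fun _ hz _ hz' hne =>
    IsC5Blowup.adj_of_forall_exists_adj ⟨hAne, hAcomp, hAanti⟩ hP5 hW4 hz.2 hz'.2 hne

theorem stmt_18 {V : Type*} [Fintype V] (G : SimpleGraph V) (A : Fin 5 → Set V)
    (hconn : G.Connected)
    (hP5 : InducedFree (SimpleGraph.pathGraph 5) G)
    (hW4 : InducedFree (wheel 4) G)
    (hatom : IsGraphAtom G)
    (hAne : ∀ i : Fin 5, (A i).Nonempty)
    (hAdisj : ∀ i j : Fin 5, i ≠ j → Disjoint (A i) (A j))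
    (hAcomp : ∀ i : Fin 5, ∀ a ∈ A i, ∀ b ∈ A (i + 1), G.Adj a b)
    (hAanti : ∀ i : Fin 5, ∀ a ∈ A i, ∀ b ∈ A (i + 2), ¬ G.Adj a b)
    (hAmax : ∀ v : V, v ∉ setA A → ¬ ∃ i : Fin 5,
      (∀ a ∈ A (i - 1) ∪ A (i + 1), G.Adj v a) ∧
      (∀ a ∈ A (i - 2) ∪ A (i + 2), ¬ G.Adj v a))
    (hZ : (setZ G A).Nonempty) :
    G.IsClique (setZ G A) :=
  stmt_18_general G A hP5 hW4 hAne hAcomp hAanti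
end
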